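/- Let $a>0$, $\sigma>0$, $p\in(0,1)$, $\rho\in[-1,1]$, $\beta\in\mathbb{R}$ with $a-p\beta\rho\sigma+\sigma^2/2>0$. Define $\eta=\frac{1}{\sigma^2}\left(\sqrt{(a-p\beta\rho\sigma+\sigma^2/2)^2+p(1-p)\beta^2\sigma^2}-(a-p\beta\rho\sigma+\sigma^2/2)\right)$ and $b>0$. Then $\phi(\nu)=\nu^{-\eta}$ satisfies $\frac{1}{2}\sigma^2\nu^3\phi''(\nu)+(b-(a-p\beta\rho\sigma)\nu)\nu\,\phi'(\nu)-\frac{1}{2}p(1-p)\beta^2\nu\,\phi(\nu)=-b\eta\,\phi(\nu)$ for all $\nu>0$. -/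

import Mathlib

/-!
A power `ν ^ r` is an eigenfunction of the generator exactly when the coefficient of the extra
factor `ν` in the generator applied to it vanishes, which is the quadratic
`σ² r (r - 1) / 2 - c r - k = 0`. With `r = -η` and `D = c + σ² / 2` this reads
`σ² η² + 2 D η = 2 k`, and `η` is precisely the non-negative root of that quadratic.
-/

open Real

theorem Real.deriv_deriv_rpow_const (r x : ℝ) :
    deriv (deriv fun y : ℝ => y ^ r) x = r * (r - 1) * x ^ (r - 2) := by
  simp only [Real.deriv_rpow_const', deriv_const_mul_field', Real.deriv_rpow_const]
  ring_nf

theorem generator_rpow_eq {σ b c k r ν : ℝ} (hν : 0 < ν) :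
    (1/2) * σ^2 * ν^3 * deriv (deriv fun y : ℝ => y ^ r) ν
        + (b - c * ν) * ν * deriv (fun y : ℝ => y ^ r) ν - k * ν * ν ^ r
      = (b * r + ν * (σ^2 * r * (r - 1) / 2 - c * r - k)) * ν ^ r := by
  have hpow : ∀ n : ℕ, ν ^ (r - n) = ν ^ r / ν ^ n := fun n => by
    rw [rpow_sub hν, rpow_natCast]
  rw [Real.deriv_deriv_rpow_const, Real.deriv_rpow_const, ← Nat.cast_ofNat, hpow, ← Nat.cast_one,
    hpow]
  field_simp
  ring

theorem quadratic_eq_of_eq_sqrt_sub_div {A D q η : ℝ} (hA : A ≠ 0) (hq : 0 ≤ D^2 + A * q)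
    (hη : η = (√(D^2 + A * q) - D) / A) :
    A * η^2 + 2 * D * η = q := by
  have hroot : A * η + D = √(D^2 + A * q) := by
    rw [hη]; field_simp; ring
  have hsq : (A * η + D)^2 = D^2 + A * q := by
    rw [hroot, sq_sqrt hq]
  apply mul_left_cancel₀ hA
  linear_combination hsq

theorem stmt_15_general (a b σ p β ρ : ℝ) (hσ : 0 < σ)
    (hp : p ∈ Set.Ioo (0:ℝ) 1)
    (η : ℝ)
    (hη : η = (Real.sqrt ((a - p*β*ρ*σ + σ^2/2)^2 + p*(1-p)*β^2*σ^2)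
        - (a - p*β*ρ*σ + σ^2/2)) / σ^2)
    (φ : ℝ → ℝ) (hφ : ∀ ν : ℝ, φ ν = ν ^ (-η)) :
    ∀ ν > (0:ℝ), (1/2)*σ^2*ν^3*deriv (deriv φ) ν + (b - (a - p*β*ρ*σ)*ν)*ν*deriv φ ν
      - (1/2)*p*(1-p)*β^2*ν*φ ν = -(b*η)*φ ν := by
  intro ν hν
  obtain rfl : φ = fun ν : ℝ => ν ^ (-η) := funext hφ
  have hq : 0 ≤ p * (1 - p) * β^2 :=
    mul_nonneg (mul_nonneg hp.1.le (sub_nonneg.2 hp.2.le)) (sq_nonneg β)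
  have hquad := quadratic_eq_of_eq_sqrt_sub_div (A := σ^2) (D := a - p*β*ρ*σ + σ^2/2)
    (q := p * (1 - p) * β^2) (η := η) (by positivity)
    (add_nonneg (sq_nonneg _) (mul_nonneg (sq_nonneg σ) hq)) (by rw [hη]; ring_nf)
  beta_reduce
  rw [generator_rpow_eq hν]
  linear_combination (ν / 2) * ν ^ (-η) * hquad

theorem stmt_15 (a b σ p β ρ : ℝ) (ha : 0 < a) (hb : 0 < b) (hσ : 0 < σ)
    (hp : p ∈ Set.Ioo (0:ℝ) 1) (hρ : ρ ∈ Set.Icc (-1:ℝ) 1)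
    (hd : 0 < a - p*β*ρ*σ + σ^2/2)
    (η : ℝ)
    (hη : η = (Real.sqrt ((a - p*β*ρ*σ + σ^2/2)^2 + p*(1-p)*β^2*σ^2)
        - (a - p*β*ρ*σ + σ^2/2)) / σ^2)
    (φ : ℝ → ℝ) (hφ : ∀ ν : ℝ, φ ν = ν ^ (-η)) :
    ∀ ν > (0:ℝ), (1/2)*σ^2*ν^3*deriv (deriv φ) ν + (b - (a - p*β*ρ*σ)*ν)*ν*deriv φ ν
      - (1/2)*p*(1-p)*β^2*ν*φ ν = -(b*η)*φ ν :=
  stmt_15_general a b σ p β ρ hσ hp η hη φ hφ
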